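/- arXiv:1510.05236 — 4 statements merged into one kernel-verified Lean document; each statement's English description precedes it below -/
import Mathlib

section
/- Let (X, ρ, μ) be an Ahlfors regular metric measure space of dimension d > 0 equipped with a family of dyadic cubes with constants δ ∈ (0,1), 0 < a₀ ≤ a₁. Let k be a positive integer such that c₂ a₁^d δ^{kd} · H ≤ c₁ a₀^d, where H = (c₂ a₁^d)/(c₁ a₀^d δ^d). Then every cube Q_α^n of generation n contains at least H cubes of generation n + k. -/
open MeasureTheory Metric Set
open scoped ENNReal NNReal

/-- In an Ahlfors regular space of dimension `d > 0` with dyadic cubes, if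
`k` is a positive integer with `c₂ a₁^d δ^{kd} H ≤ c₁ a₀^d` where `H = (c₂ a₁^d)/(c₁ a₀^d δ^d)`,
then every cube of generation `n` contains at least `H` cubes of generation `n + k`. -/
theorem dyadic_cube_contains_subcubes
    {X : Type*} [MetricSpace X] [CompleteSpace X]
    [MeasurableSpace X] [BorelSpace X] (μ : Measure X)
    (d c₁ c₂ : ℝ) (hd : 0 < d) (hc₁ : 0 < c₁) (hc₁₂ : c₁ ≤ c₂)
    (hAR : ∀ (x : X) (r : ℝ), 0 < r →
      ENNReal.ofReal r ≤ EMetric.diam (Set.univ : Set X) →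
      ENNReal.ofReal (c₁ * r ^ d) ≤ μ (Metric.ball x r) ∧
        μ (Metric.ball x r) ≤ ENNReal.ofReal (c₂ * r ^ d))
    (δ a₀ a₁ : ℝ) (hδ0 : 0 < δ) (hδ1 : δ < 1) (ha₀ : 0 < a₀) (ha₀₁ : a₀ ≤ a₁)
    (I : ℤ → Type*) (Q : ∀ k : ℤ, I k → Set X) (z : ∀ k : ℤ, I k → X)
    (hcover : ∀ k : ℤ, μ (Set.univ \ ⋃ α : I k, Q k α) = 0)
    (hdisj : ∀ (k : ℤ) (α β : I k), α ≠ β → Disjoint (Q k α) (Q k β))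
    (hnest : ∀ (k l : ℤ), k < l → ∀ (α : I k) (β : I l),
      Q l β ⊆ Q k α ∨ Disjoint (Q l β) (Q k α))
    (hinner : ∀ (k : ℤ) (α : I k), Metric.ball (z k α) (a₀ * δ ^ k) ⊆ Q k α)
    (houter : ∀ (k : ℤ) (α : I k), Q k α ⊆ Metric.ball (z k α) (a₁ * δ ^ k))
    (k : ℕ) (hk : 0 < k)
    (hkd : c₂ * a₁ ^ d * ((δ ^ k : ℝ)) ^ d * ((c₂ * a₁ ^ d) / (c₁ * a₀ ^ d * δ ^ d))
      ≤ c₁ * a₀ ^ d) :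
    ∀ n : ℤ, ENNReal.ofReal (a₀ * δ ^ n) ≤ EMetric.diam (Set.univ : Set X) →
      ∀ α : I n, ∃ S : Finset (I (n + k)),
        (∀ β ∈ S, Q (n + k) β ⊆ Q n α) ∧
        (c₂ * a₁ ^ d) / (c₁ * a₀ ^ d * δ ^ d) ≤ (S.card : ℝ) := by
  intro n hdiam α
  set H : ℝ := (c₂ * a₁ ^ d) / (c₁ * a₀ ^ d * δ ^ d) with hH
  have hc₂ : 0 < c₂ := hc₁.trans_le hc₁₂
  have ha₁ : 0 < a₁ := ha₀.trans_le ha₀₁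
  have hK : (0:ℝ) < δ ^ k := pow_pos hδ0 k
  have hKd : (0:ℝ) < (δ ^ k : ℝ) ^ d := Real.rpow_pos_of_pos hK d
  have ha₀d : (0:ℝ) < a₀ ^ d := Real.rpow_pos_of_pos ha₀ d
  have ha₁d : (0:ℝ) < a₁ ^ d := Real.rpow_pos_of_pos ha₁ d
  have hδd : (0:ℝ) < δ ^ d := Real.rpow_pos_of_pos hδ0 d
  have hδd1 : δ ^ d ≤ 1 := Real.rpow_le_one hδ0.le hδ1.le hd.le
  have hDpos : (0:ℝ) < δ ^ (n : ℤ) := zpow_pos hδ0 n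
  have hDd : (0:ℝ) < (δ ^ (n:ℤ) : ℝ) ^ d := Real.rpow_pos_of_pos hDpos d
  -- H ≥ 1
  have hH1 : (1:ℝ) ≤ H := by
    rw [hH, le_div_iff₀ (by positivity)]
    have h1 : a₀ ^ d ≤ a₁ ^ d := Real.rpow_le_rpow ha₀.le ha₀₁ hd.le
    have h2 : c₁ * a₀ ^ d ≤ c₂ * a₁ ^ d := mul_le_mul hc₁₂ h1 ha₀d.le hc₂.le
    have h3 : c₁ * a₀ ^ d * δ ^ d ≤ c₁ * a₀ ^ d :=
      mul_le_of_le_one_right (by positivity) hδd1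
    linarith
  -- a₁ * δ ^ k ≤ a₀
  have hkey : a₁ * δ ^ k ≤ a₀ := by
    have h1 : c₂ * a₁ ^ d * (δ ^ k : ℝ) ^ d ≤ c₁ * a₀ ^ d := by
      calc c₂ * a₁ ^ d * (δ ^ k : ℝ) ^ d
          ≤ c₂ * a₁ ^ d * (δ ^ k : ℝ) ^ d * H := le_mul_of_one_le_right (by positivity) hH1
        _ ≤ c₁ * a₀ ^ d := hkd
    have h2 : (a₁ * δ ^ k) ^ d ≤ a₀ ^ d := by
      rw [Real.mul_rpow ha₁.le hK.le]
      nlinarith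
    by_contra hcon
    push_neg at hcon
    have := Real.rpow_lt_rpow ha₀.le hcon hd
    linarith
  -- radius comparison for subcubes
  have hrad : a₁ * δ ^ (n + (k:ℤ)) ≤ a₀ * δ ^ (n:ℤ) := by
    rw [zpow_add₀ (ne_of_gt hδ0), zpow_natCast]
    calc a₁ * (δ ^ (n:ℤ) * δ ^ k) = (a₁ * δ ^ k) * δ ^ (n:ℤ) := by ring
      _ ≤ a₀ * δ ^ (n:ℤ) := by
          exact mul_le_mul_of_nonneg_right hkey hDpos.le
  have hradpos : (0:ℝ) < a₁ * δ ^ (n + (k:ℤ)) := by positivity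
  have hdiam' : ENNReal.ofReal (a₁ * δ ^ (n + (k:ℤ))) ≤ EMetric.diam (Set.univ : Set X) :=
    le_trans (ENNReal.ofReal_le_ofReal hrad) hdiam
  have hnk : n < n + (k:ℤ) := lt_add_of_pos_right n (by exact_mod_cast hk)
  -- the set of subcubes contained in Q n α
  set P : Set (I (n + (k:ℤ))) := {β | Q (n + (k:ℤ)) β ⊆ Q n α} with hP
  by_cases hfin : P.Finite
  · -- finite case: measure counting
    refine ⟨hfin.toFinset, fun β hβ => by simpa [hP] using (hfin.mem_toFinset.mp hβ), ?_⟩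
    set S := hfin.toFinset with hS
    -- lower bound on μ (Q n α)
    have hlow : ENNReal.ofReal (c₁ * (a₀ * δ ^ (n:ℤ)) ^ d) ≤ μ (Q n α) :=
      le_trans ((hAR (z n α) (a₀ * δ ^ (n:ℤ)) (by positivity) hdiam).1)
        (measure_mono (hinner n α))
    -- upper bound for each subcube
    have hup : ∀ β : I (n + (k:ℤ)),
        μ (Q (n + (k:ℤ)) β) ≤ ENNReal.ofReal (c₂ * (a₁ * δ ^ (n + (k:ℤ))) ^ d) := fun β =>
      le_trans (measure_mono (houter (n + (k:ℤ)) β))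
        ((hAR (z (n + (k:ℤ)) β) (a₁ * δ ^ (n + (k:ℤ))) hradpos hdiam').2)
    -- covering claim
    have hcov : Q n α ⊆ (Set.univ \ ⋃ β : I (n + (k:ℤ)), Q (n + (k:ℤ)) β) ∪
        ⋃ β ∈ S, Q (n + (k:ℤ)) β := by
      intro x hx
      by_cases hxU : x ∈ ⋃ β : I (n + (k:ℤ)), Q (n + (k:ℤ)) β
      · obtain ⟨β₀, hβ₀⟩ := Set.mem_iUnion.mp hxU
        rcases hnest n (n + (k:ℤ)) hnk α β₀ with hsub | hdis
        · exact Or.inr (Set.mem_biUnion (hfin.mem_toFinset.mpr hsub) hβ₀)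
        · exact absurd hx (Set.disjoint_left.mp hdis hβ₀)
      · exact Or.inl ⟨Set.mem_univ x, hxU⟩
    have hμcov : μ (Q n α) ≤ S.card • ENNReal.ofReal (c₂ * (a₁ * δ ^ (n + (k:ℤ))) ^ d) := by
      calc μ (Q n α) ≤ μ ((Set.univ \ ⋃ β : I (n + (k:ℤ)), Q (n + (k:ℤ)) β) ∪
            ⋃ β ∈ S, Q (n + (k:ℤ)) β) := measure_mono hcov
        _ ≤ μ (Set.univ \ ⋃ β : I (n + (k:ℤ)), Q (n + (k:ℤ)) β) +
            μ (⋃ β ∈ S, Q (n + (k:ℤ)) β) := measure_union_le _ _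
        _ = μ (⋃ β ∈ S, Q (n + (k:ℤ)) β) := by rw [hcover (n + (k:ℤ)), zero_add]
        _ ≤ ∑ β ∈ S, μ (Q (n + (k:ℤ)) β) := measure_biUnion_finset_le _ _
        _ ≤ S.card • ENNReal.ofReal (c₂ * (a₁ * δ ^ (n + (k:ℤ))) ^ d) :=
            Finset.sum_le_card_nsmul _ _ _ (fun β _ => hup β)
    -- convert to reals
    have hreal : c₁ * (a₀ * δ ^ (n:ℤ)) ^ d ≤
        (S.card : ℝ) * (c₂ * (a₁ * δ ^ (n + (k:ℤ))) ^ d) := by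
      have h1 : ENNReal.ofReal (c₁ * (a₀ * δ ^ (n:ℤ)) ^ d) ≤
          ENNReal.ofReal ((S.card : ℝ) * (c₂ * (a₁ * δ ^ (n + (k:ℤ))) ^ d)) := by
        refine le_trans (hlow.trans hμcov) (le_of_eq ?_)
        rw [nsmul_eq_mul, ← ENNReal.ofReal_natCast S.card,
          ← ENNReal.ofReal_mul (by positivity)]
      rwa [ENNReal.ofReal_le_ofReal_iff (by positivity)] at h1
    -- algebra
    have hsplit : (a₁ * δ ^ (n + (k:ℤ))) ^ d =
        a₁ ^ d * ((δ ^ (n:ℤ) : ℝ) ^ d * (δ ^ k : ℝ) ^ d) := by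
      rw [zpow_add₀ (ne_of_gt hδ0), zpow_natCast, Real.mul_rpow ha₁.le (by positivity),
        Real.mul_rpow hDpos.le hK.le]
    have hsplit₀ : (a₀ * δ ^ (n:ℤ)) ^ d = a₀ ^ d * (δ ^ (n:ℤ) : ℝ) ^ d :=
      Real.mul_rpow ha₀.le hDpos.le
    rw [hsplit, hsplit₀] at hreal
    have h2 : c₁ * a₀ ^ d ≤ (S.card : ℝ) * (c₂ * a₁ ^ d * (δ ^ k : ℝ) ^ d) := by
      have := mul_le_mul_of_nonneg_right hreal (le_of_lt (inv_pos.mpr hDd))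
      calc c₁ * a₀ ^ d = c₁ * (a₀ ^ d * (δ ^ (n:ℤ):ℝ) ^ d) * ((δ ^ (n:ℤ):ℝ) ^ d)⁻¹ := by
            field_simp
        _ ≤ (S.card : ℝ) * (c₂ * (a₁ ^ d * ((δ ^ (n:ℤ):ℝ) ^ d * (δ ^ k : ℝ) ^ d))) *
            ((δ ^ (n:ℤ):ℝ) ^ d)⁻¹ := this
        _ = (S.card : ℝ) * (c₂ * a₁ ^ d * (δ ^ k : ℝ) ^ d) := by field_simp
    -- conclude H ≤ card
    have hpos : (0:ℝ) < c₂ * a₁ ^ d * (δ ^ k : ℝ) ^ d := by positivity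
    have h3 : c₂ * a₁ ^ d * (δ ^ k : ℝ) ^ d * H ≤
        c₂ * a₁ ^ d * (δ ^ k : ℝ) ^ d * (S.card : ℝ) := by
      calc c₂ * a₁ ^ d * (δ ^ k : ℝ) ^ d * H ≤ c₁ * a₀ ^ d := hkd
        _ ≤ (S.card : ℝ) * (c₂ * a₁ ^ d * (δ ^ k : ℝ) ^ d) := h2
        _ = c₂ * a₁ ^ d * (δ ^ k : ℝ) ^ d * (S.card : ℝ) := by ring
    exact le_of_mul_le_mul_left h3 hpos
  · -- infinite case: extract a finite subset of any desired size
    have hinf : P.Infinite := hfin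
    obtain ⟨S, hSsub, hScard⟩ := hinf.exists_subset_card_eq ⌈H⌉₊
    refine ⟨S, fun β hβ => hSsub hβ, ?_⟩
    rw [hScard]
    exact le_trans (Nat.le_ceil H) (by norm_num)
end

section
/- Let (X, ρ, μ) be an Ahlfors regular metric measure space of dimension d > 0 with finite measure, equipped with a family of dyadic cubes. Then there exist positive constants c₃ and c₄ such that for every positive integer N there is a partition of X into exactly N measurable regions, each contained in a closed ball of radius c₃ N^{-1/d} and each containing an open ball of radius c₄ N^{-1/d}. -/
/-!
Take a greedy sequence x₀, x₁, … in X, each xₙ lying at distance at least tₙ / 2 from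
{x₀, …, xₙ₋₁}, where tₙ is the covering radius of that set; (tₙ) is non-increasing for
n ≥ 1. Then x₀, …, x_{N-1} are t_N / 2-separated, so the balls of radius t_N / 4 around them are
disjoint and the lower Ahlfors bound gives N c₁ (t_N / 4)^d ≤ μ(X). Conversely the first N - 1
points form a t_{N-1}-net, and the upper bound, extended to closed balls of every radius as
μ(B̄(x, r)) ≤ A r^d, gives μ(X) ≤ N A t_{N-1}^d. Hence both t_N and
t_{N-1} are comparable to N^{-1/d}, and the Voronoi cells of x₀, …, x_{N-1} (ties broken by the
least index) lie in balls of radius t_N and contain balls of radius t_{N-1} / 4.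
-/

open MeasureTheory Metric Set Filter Topology
open scoped Finset

noncomputable section

lemma div_rpow_mul_rpow_neg_eq {M c n d : ℝ} (hMc : 0 ≤ M / c) (hn : 0 < n) :
    (M / c) ^ (1 / d) * n ^ (-(1 / d)) = (M / (c * n)) ^ d⁻¹ := by
  rw [Real.rpow_neg hn.le, ← div_eq_mul_inv, ← Real.div_rpow hMc hn.le, div_div, one_div]

lemma le_div_rpow_mul_rpow_neg_iff {M c n d s : ℝ} (hd : 0 < d) (hc : 0 < c) (hn : 0 < n)
    (hM : 0 ≤ M) (hs : 0 ≤ s) :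
    s ≤ (M / c) ^ (1 / d) * n ^ (-(1 / d)) ↔ n * (c * s ^ d) ≤ M := by
  rw [div_rpow_mul_rpow_neg_eq (by positivity) hn,
    Real.le_rpow_inv_iff_of_pos hs (by positivity) hd, le_div_iff₀ (by positivity),
    show s ^ d * (c * n) = n * (c * s ^ d) by ring]

lemma div_rpow_mul_rpow_neg_le_iff {M c n d s : ℝ} (hd : 0 < d) (hc : 0 < c) (hn : 0 < n)
    (hM : 0 ≤ M) (hs : 0 ≤ s) :
    (M / c) ^ (1 / d) * n ^ (-(1 / d)) ≤ s ↔ M ≤ n * (c * s ^ d) := by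
  rw [div_rpow_mul_rpow_neg_eq (by positivity) hn,
    Real.rpow_inv_le_iff_of_pos (by positivity) hs hd, div_le_iff₀ (by positivity),
    show s ^ d * (c * n) = n * (c * s ^ d) by ring]

section Voronoi

variable {X ι : Type*} [MetricSpace X]

def voronoiCell (q : ι → X) (i : ι) : Set X := {p | ∀ j, dist p (q i) ≤ dist p (q j)}

lemma isClosed_voronoiCell (q : ι → X) (i : ι) : IsClosed (voronoiCell q i) := by
  simp only [voronoiCell, ofPred_forall]
  exact isClosed_iInter fun j =>
    isClosed_le (continuous_id.dist continuous_const) (continuous_id.dist continuous_const)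

lemma iUnion_voronoiCell [Finite ι] [Nonempty ι] (q : ι → X) : ⋃ i, voronoiCell q i = univ :=
  eq_univ_of_forall fun p => mem_iUnion.2 (Finite.exists_min fun j => dist p (q j))

lemma voronoiCell_subset_closedBall {q : ι → X} {r : ℝ} (hq : ∀ p, ∃ j, dist p (q j) ≤ r)
    (i : ι) : voronoiCell q i ⊆ closedBall (q i) r := fun p hp =>
  let ⟨j, hj⟩ := hq p
  (hp j).trans hj

lemma dist_lt_dist_of_mem_ball {q : ι → X} {i : ι} {r : ℝ}
    (hq : ∀ j ≠ i, 2 * r ≤ dist (q i) (q j)) {p : X} (hp : p ∈ ball (q i) r) {j : ι}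
    (hj : j ≠ i) : dist p (q i) < dist p (q j) := by
  have hqij := hq j hj
  have htri := dist_triangle_left (q i) (q j) p
  rw [mem_ball] at hp
  linarith

variable [Preorder ι] [LocallyFiniteOrderBot ι]

lemma measurableSet_disjointed_voronoiCell [Countable ι] [MeasurableSpace X]
    [OpensMeasurableSpace X] (q : ι → X) (i : ι) :
    MeasurableSet (disjointed (voronoiCell q) i) := by
  rw [disjointed_eq_inter_compl]
  exact (isClosed_voronoiCell q i).measurableSet.inter <| .iInter fun j => .iInter fun _ =>
    (isClosed_voronoiCell q j).measurableSet.compl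

lemma ball_subset_disjointed_voronoiCell {q : ι → X} {i : ι} {r : ℝ}
    (hq : ∀ j ≠ i, 2 * r ≤ dist (q i) (q j)) :
    ball (q i) r ⊆ disjointed (voronoiCell q) i := by
  intro p hp
  rw [disjointed_eq_inter_compl]
  refine ⟨fun j => ?_, mem_iInter₂.2 fun j hji hpj => ?_⟩
  · rcases eq_or_ne j i with rfl | hji
    · exact le_rfl
    · exact (dist_lt_dist_of_mem_ball hq hp hji).le
  · exact (hpj i).not_gt (dist_lt_dist_of_mem_ball hq hp hji.ne)

end Voronoi

section Greedy

variable {X : Type*} [MetricSpace X]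

def coveringRadius (F : Finset X) : ℝ := ⨆ y, infDist y (F : Set X)

lemma infDist_le_diam_univ [BoundedSpace X] (y : X) (F : Finset X) :
    infDist y (F : Set X) ≤ diam (univ : Set X) := by
  rcases F.eq_empty_or_nonempty with rfl | ⟨p, hp⟩
  · simpa using diam_nonneg
  · exact (infDist_le_dist_of_mem (Finset.mem_coe.2 hp)).trans
      (dist_le_diam_of_mem (Bornology.isBounded_univ.2 ‹_›) (mem_univ y) (mem_univ p))

lemma infDist_le_coveringRadius [BoundedSpace X] (y : X) (F : Finset X) :
    infDist y (F : Set X) ≤ coveringRadius F :=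
  le_ciSup ⟨_, forall_mem_range.2 fun y => infDist_le_diam_univ y F⟩ y

lemma coveringRadius_le_diam_univ [BoundedSpace X] (F : Finset X) :
    coveringRadius F ≤ diam (univ : Set X) :=
  Real.iSup_le (fun y => infDist_le_diam_univ y F) diam_nonneg

lemma exists_dist_le_coveringRadius [BoundedSpace X] {F : Finset X} (hF : F.Nonempty) (y : X) :
    ∃ p ∈ F, dist y p ≤ coveringRadius F := by
  obtain ⟨p, hp, hyp⟩ :=
    F.finite_toSet.isCompact.exists_infDist_eq_dist (Finset.coe_nonempty.2 hF) y
  exact ⟨p, hp, hyp ▸ infDist_le_coveringRadius y F⟩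

lemma coveringRadius_pos [BoundedSpace X] [Infinite X] {F : Finset X} (hF : F.Nonempty) :
    0 < coveringRadius F := by
  obtain ⟨y, hy⟩ := Infinite.exists_notMem_finset F
  exact ((F.finite_toSet.isClosed.notMem_iff_infDist_pos (Finset.coe_nonempty.2 hF)).1 hy).trans_le
    (infDist_le_coveringRadius y F)

lemma coveringRadius_anti [BoundedSpace X] {F G : Finset X} (hFG : F ⊆ G) (hF : F.Nonempty) :
    coveringRadius G ≤ coveringRadius F :=
  Real.iSup_le
    (fun y => (infDist_le_infDist_of_subset (Finset.coe_subset.2 hFG)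
      (Finset.coe_nonempty.2 hF)).trans (infDist_le_coveringRadius y F))
    (Real.iSup_nonneg fun _ => infDist_nonneg)

lemma exists_half_coveringRadius_le_infDist [Nonempty X] (F : Finset X) :
    ∃ y, coveringRadius F / 2 ≤ infDist y (F : Set X) := by
  rcases le_or_gt (coveringRadius F) 0 with h | h
  · exact ⟨Classical.arbitrary X,
      (by linarith : coveringRadius F / 2 ≤ 0).trans infDist_nonneg⟩
  · obtain ⟨y, hy⟩ := exists_lt_of_lt_ciSup (half_lt_self h)
    exact ⟨y, hy.le⟩

variable [Nonempty X]

/-- The supremum defining `coveringRadius F` need not be attained, hence the factor `1 / 2`. -/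
def farPoint (F : Finset X) : X := (exists_half_coveringRadius_le_infDist F).choose

variable (X) in
open Classical in
def greedyNet : ℕ → Finset X
  | 0 => ∅
  | n + 1 => insert (farPoint (greedyNet n)) (greedyNet n)

variable (X) in
def greedySeq (n : ℕ) : X := farPoint (greedyNet X n)

open Classical in
lemma greedyNet_eq_image (n : ℕ) : greedyNet X n = (Finset.range n).image (greedySeq X) := by
  induction n with
  | zero => rfl
  | succ n ih => rw [Finset.range_add_one, Finset.image_insert, ← ih]; rfl

lemma mem_greedyNet {n : ℕ} {p : X} : p ∈ greedyNet X n ↔ ∃ i < n, greedySeq X i = p := by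
  classical
  simp [greedyNet_eq_image]

lemma card_greedyNet_le (n : ℕ) : #(greedyNet X n) ≤ n := by
  classical
  rw [greedyNet_eq_image]
  exact Finset.card_image_le.trans (Finset.card_range n).le

lemma greedyNet_nonempty {n : ℕ} (hn : 0 < n) : (greedyNet X n).Nonempty :=
  ⟨greedySeq X 0, mem_greedyNet.2 ⟨0, hn, rfl⟩⟩

lemma greedyNet_mono : Monotone (greedyNet X) := fun _ _ hmn _ hp =>
  let ⟨i, hi, hip⟩ := mem_greedyNet.1 hp
  mem_greedyNet.2 ⟨i, hi.trans_le hmn, hip⟩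

lemma half_coveringRadius_le_infDist_greedySeq (n : ℕ) :
    coveringRadius (greedyNet X n) / 2 ≤ infDist (greedySeq X n) (greedyNet X n : Set X) :=
  (exists_half_coveringRadius_le_infDist _).choose_spec

variable [BoundedSpace X]

lemma half_coveringRadius_greedyNet_le_dist {i j n : ℕ} (hij : i ≠ j) (hi : i ≤ n)
    (hj : j ≤ n) :
    coveringRadius (greedyNet X n) / 2 ≤ dist (greedySeq X i) (greedySeq X j) := by
  wlog hlt : i < j generalizing i j
  · rw [dist_comm]
    exact this hij.symm hj hi (hij.symm.lt_of_le (not_lt.1 hlt))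
  calc coveringRadius (greedyNet X n) / 2
      ≤ coveringRadius (greedyNet X j) / 2 := by
        gcongr
        exact coveringRadius_anti (greedyNet_mono hj) (greedyNet_nonempty (i.zero_le.trans_lt hlt))
    _ ≤ infDist (greedySeq X j) (greedyNet X j : Set X) :=
        half_coveringRadius_le_infDist_greedySeq j
    _ ≤ dist (greedySeq X j) (greedySeq X i) :=
        infDist_le_dist_of_mem (Finset.mem_coe.2 (mem_greedyNet.2 ⟨i, hlt, rfl⟩))
    _ = dist (greedySeq X i) (greedySeq X j) := dist_comm _ _

lemma exists_dist_greedySeq_le {n : ℕ} (hn : 0 < n) (y : X) :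
    ∃ i < n, dist y (greedySeq X i) ≤ coveringRadius (greedyNet X n) := by
  obtain ⟨p, hp, hyp⟩ := exists_dist_le_coveringRadius (greedyNet_nonempty hn) y
  obtain ⟨i, hi, rfl⟩ := mem_greedyNet.1 hp
  exact ⟨i, hi, hyp⟩

end Greedy

section Counting

variable {X ι : Type*} [MeasurableSpace X] {μ : Measure X} [IsFiniteMeasure μ]

lemma card_mul_le_measureReal_univ {s : Finset ι} {B : ι → Set X} {m : ℝ}
    (hB : ∀ i ∈ s, MeasurableSet (B i)) (hdisj : (s : Set ι).PairwiseDisjoint B)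
    (hmB : ∀ i ∈ s, ENNReal.ofReal m ≤ μ (B i)) : #s * m ≤ μ.real univ := by
  rw [measureReal_def, ← ENNReal.ofReal_le_iff_le_toReal (measure_ne_top μ univ)]
  calc ENNReal.ofReal (#s * m) = ∑ _i ∈ s, ENNReal.ofReal m := by
        rw [Finset.sum_const, nsmul_eq_mul, ENNReal.ofReal_mul (Nat.cast_nonneg _),
          ENNReal.ofReal_natCast]
    _ ≤ ∑ i ∈ s, μ (B i) := Finset.sum_le_sum hmB
    _ = μ (⋃ i ∈ s, B i) := (measure_biUnion_finset hdisj hB).symm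
    _ ≤ μ univ := measure_mono (subset_univ _)

lemma measureReal_univ_le_card_mul {s : Finset ι} {B : ι → Set X} {m : ℝ} (hm : 0 ≤ m)
    (hcover : ⋃ i ∈ s, B i = univ) (hmB : ∀ i ∈ s, μ (B i) ≤ ENNReal.ofReal m) :
    μ.real univ ≤ #s * m := by
  rw [measureReal_def, ← ENNReal.ofReal_le_ofReal_iff (by positivity),
    ENNReal.ofReal_toReal (measure_ne_top μ univ)]
  calc μ univ = μ (⋃ i ∈ s, B i) := by rw [hcover]
    _ ≤ ∑ i ∈ s, μ (B i) := measure_biUnion_finset_le _ _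
    _ ≤ ∑ _i ∈ s, ENNReal.ofReal m := Finset.sum_le_sum hmB
    _ = ENNReal.ofReal (#s * m) := by
        rw [Finset.sum_const, nsmul_eq_mul, ENNReal.ofReal_mul (Nat.cast_nonneg _),
          ENNReal.ofReal_natCast]

lemma le_coveringRadius_greedyNet [MetricSpace X] [BoundedSpace X] [Infinite X] {d A : ℝ}
    (hd : 0 < d) (hA : 0 < A)
    (hball : ∀ (x : X) (r : ℝ), 0 < r → μ (closedBall x r) ≤ ENNReal.ofReal (A * r ^ d))
    {n N : ℕ} (hn : 0 < n) (hnN : n ≤ N) :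
    (μ.real univ / A) ^ (1 / d) * N ^ (-(1 / d)) ≤ coveringRadius (greedyNet X n) := by
  set t := coveringRadius (greedyNet X n)
  have ht : 0 < t := coveringRadius_pos (greedyNet_nonempty hn)
  have hcover : ⋃ p ∈ greedyNet X n, closedBall p t = univ := eq_univ_of_forall fun y =>
    let ⟨p, hp, hyp⟩ := exists_dist_le_coveringRadius (greedyNet_nonempty hn) y
    mem_iUnion₂.2 ⟨p, hp, mem_closedBall.2 hyp⟩
  refine (div_rpow_mul_rpow_neg_le_iff hd hA (by exact_mod_cast hn.trans_le hnN)
    measureReal_nonneg ht.le).2 ?_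
  calc μ.real univ ≤ #(greedyNet X n) * (A * t ^ d) :=
        measureReal_univ_le_card_mul (by positivity) hcover fun p _ => hball p t ht
    _ ≤ N * (A * t ^ d) := by
        gcongr
        exact_mod_cast (card_greedyNet_le n).trans hnN

end Counting

section AhlforsRegular

variable {X : Type*} [MetricSpace X]

lemma nonempty_of_diam_univ_pos (hD : 0 < diam (univ : Set X)) : Nonempty X := by
  by_contra hX
  have := not_nonempty_iff.1 hX
  rw [Set.univ_eq_empty_iff.2 this, diam_empty] at hD
  exact lt_irrefl 0 hD

lemma boundedSpace_of_diam_univ_pos (hD : 0 < diam (univ : Set X)) : BoundedSpace X :=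
  Bornology.isBounded_univ.1 <| by
    by_contra hX
    exact hD.ne' (diam_eq_zero_of_unbounded hX)

variable [MeasurableSpace X]

def IsAhlforsRegular (μ : Measure X) (d c₁ c₂ : ℝ) : Prop :=
  ∀ (x : X) (r : ℝ), 0 < r → ENNReal.ofReal r ≤ ediam (univ : Set X) →
    ENNReal.ofReal (c₁ * r ^ d) ≤ μ (ball x r) ∧
      μ (ball x r) ≤ ENNReal.ofReal (c₂ * r ^ d)

namespace IsAhlforsRegular

variable {μ : Measure X} {d c₁ c₂ : ℝ}

lemma ofReal_le_measure_ball (h : IsAhlforsRegular μ d c₁ c₂) (x : X) {r : ℝ} (hr : 0 < r)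
    (hrD : r ≤ diam (univ : Set X)) : ENNReal.ofReal (c₁ * r ^ d) ≤ μ (ball x r) :=
  (h x r hr (ENNReal.ofReal_le_of_le_toReal hrD)).1

lemma measure_ball_le (h : IsAhlforsRegular μ d c₁ c₂) (x : X) {r : ℝ} (hr : 0 < r)
    (hrD : r ≤ diam (univ : Set X)) : μ (ball x r) ≤ ENNReal.ofReal (c₂ * r ^ d) :=
  (h x r hr (ENNReal.ofReal_le_of_le_toReal hrD)).2

lemma ediam_univ_ne_top [IsFiniteMeasure μ] [Nonempty X] (h : IsAhlforsRegular μ d c₁ c₂)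
    (hd : 0 < d) (hc₁ : 0 < c₁) : ediam (univ : Set X) ≠ ⊤ := by
  intro htop
  have hM : 0 ≤ μ.real univ := measureReal_nonneg
  set r := ((μ.real univ + 1) / c₁) ^ d⁻¹
  have hcr : c₁ * r ^ d = μ.real univ + 1 := by
    rw [Real.rpow_inv_rpow (by positivity) hd.ne', mul_div_cancel₀ _ hc₁.ne']
  have hball := (h (Classical.arbitrary X) r (by positivity) (htop ▸ le_top)).1.trans
    (measure_mono (subset_univ _))
  rw [hcr, ENNReal.ofReal_le_iff_le_toReal (measure_ne_top μ univ), ← measureReal_def] at hball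
  linarith

lemma diam_univ_pos [IsFiniteMeasure μ] (h : IsAhlforsRegular μ d c₁ c₂) (hd : 0 < d)
    (hc₁ : 0 < c₁) (hdiam : 0 < ediam (univ : Set X)) : 0 < diam (univ : Set X) :=
  have : Nonempty X := ⟨(ediam_pos_iff.1 hdiam).nonempty.some⟩
  ENNReal.toReal_pos hdiam.ne' (h.ediam_univ_ne_top hd hc₁)

lemma neZero (h : IsAhlforsRegular μ d c₁ c₂) (hc₁ : 0 < c₁)
    (hD : 0 < diam (univ : Set X)) : NeZero μ := by
  have := nonempty_of_diam_univ_pos hD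
  have hpos : 0 < ENNReal.ofReal (c₁ * diam (univ : Set X) ^ d) :=
    ENNReal.ofReal_pos.2 (by positivity)
  refine ⟨fun hμ => hpos.ne' ?_⟩
  simpa [hμ] using h.ofReal_le_measure_ball (Classical.arbitrary X) hD le_rfl

lemma nullSingletonClass (h : IsAhlforsRegular μ d c₁ c₂) (hd : 0 < d)
    (hD : 0 < diam (univ : Set X)) : NullSingletonClass μ := by
  have hlim : Tendsto (fun r : ℝ => ENNReal.ofReal (c₂ * r ^ d)) (𝓝[>] 0) (𝓝 0) := by
    have hcont : ContinuousAt (fun r : ℝ => ENNReal.ofReal (c₂ * r ^ d)) 0 :=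
      ENNReal.continuous_ofReal.continuousAt.comp
        (continuousAt_const.mul (Real.continuousAt_rpow_const 0 d (Or.inr hd.le)))
    simpa [Real.zero_rpow hd.ne'] using hcont.tendsto.mono_left nhdsWithin_le_nhds
  refine ⟨fun x => le_antisymm (ge_of_tendsto hlim ?_) bot_le⟩
  filter_upwards [Ioc_mem_nhdsGT hD] with r hr
  exact (measure_mono (singleton_subset_iff.2 (mem_ball_self hr.1))).trans
    (h.measure_ball_le x hr.1 hr.2)

lemma infinite (h : IsAhlforsRegular μ d c₁ c₂) (hd : 0 < d) (hc₁ : 0 < c₁)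
    (hD : 0 < diam (univ : Set X)) : Infinite X := by
  have := h.neZero hc₁ hD
  have := h.nullSingletonClass hd hD
  by_contra hfin
  rw [not_infinite_iff_finite] at hfin
  exact Measure.measure_univ_ne_zero.2 (NeZero.ne μ) (finite_univ.measure_zero μ)

lemma exists_measure_closedBall_le [IsFiniteMeasure μ] (h : IsAhlforsRegular μ d c₁ c₂)
    (hd : 0 < d) (hc₁ : 0 < c₁) (hD : 0 < diam (univ : Set X)) :
    ∃ A > 0, ∀ (x : X) (r : ℝ), 0 < r →
      μ (closedBall x r) ≤ ENNReal.ofReal (A * r ^ d) := by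
  have := h.neZero hc₁ hD
  set D := diam (univ : Set X)
  have hM : 0 < μ.real univ := measureReal_univ_pos
  refine ⟨max (c₂ * 2 ^ d) (μ.real univ * (2 / D) ^ d), lt_max_of_lt_right (by positivity),
    fun x r hr => ?_⟩
  rcases le_or_gt (2 * r) D with h2r | h2r
  · calc μ (closedBall x r) ≤ μ (ball x (2 * r)) :=
          measure_mono (closedBall_subset_ball (by linarith))
      _ ≤ ENNReal.ofReal (c₂ * (2 * r) ^ d) := h.measure_ball_le x (by positivity) h2r
      _ ≤ _ := by
          refine ENNReal.ofReal_le_ofReal ?_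
          rw [Real.mul_rpow zero_le_two hr.le, ← mul_assoc]
          exact mul_le_mul_of_nonneg_right (le_max_left _ _) (by positivity)
  · calc μ (closedBall x r) ≤ μ univ := measure_mono (subset_univ _)
      _ = ENNReal.ofReal (μ.real univ) := (ENNReal.ofReal_toReal (measure_ne_top μ univ)).symm
      _ ≤ _ := ENNReal.ofReal_le_ofReal ?_
    calc μ.real univ ≤ μ.real univ * (2 * r / D) ^ d :=
          le_mul_of_one_le_right hM.le (Real.one_le_rpow ((one_le_div hD).2 h2r.le) hd.le)
      _ = μ.real univ * (2 / D) ^ d * r ^ d := by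
          rw [mul_div_right_comm, Real.mul_rpow (by positivity) hr.le, mul_assoc]
      _ ≤ _ := mul_le_mul_of_nonneg_right (le_max_right _ _) (by positivity)

lemma coveringRadius_greedyNet_le [OpensMeasurableSpace X] [IsFiniteMeasure μ]
    [BoundedSpace X] [Infinite X] (h : IsAhlforsRegular μ d c₁ c₂) (hd : 0 < d) (hc₁ : 0 < c₁)
    {N : ℕ} (hN : 0 < N) :
    coveringRadius (greedyNet X N) ≤ 4 * (μ.real univ / c₁) ^ (1 / d) * N ^ (-(1 / d)) := by
  set t := coveringRadius (greedyNet X N)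
  have ht : 0 < t := coveringRadius_pos (greedyNet_nonempty hN)
  have hdisj : (Finset.range N : Set ℕ).PairwiseDisjoint fun i => ball (greedySeq X i) (t / 4) :=
    fun i hi j hj hij => ball_disjoint_ball <| by
      have := half_coveringRadius_greedyNet_le_dist (X := X) hij
        (Finset.mem_range.1 hi).le (Finset.mem_range.1 hj).le
      linarith
  have hpack : (N : ℝ) * (c₁ * (t / 4) ^ d) ≤ μ.real univ := by
    simpa using card_mul_le_measureReal_univ (fun _ _ => measurableSet_ball) hdisj
      fun i _ => h.ofReal_le_measure_ball _ (by positivity)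
        (by linarith [coveringRadius_le_diam_univ (greedyNet X N)])
  have := (le_div_rpow_mul_rpow_neg_iff hd hc₁ (Nat.cast_pos.2 hN) measureReal_nonneg
    (by positivity)).2 hpack
  linarith

end IsAhlforsRegular

end AhlforsRegular

end

theorem exists_partition_of_dyadic_cubes_general
    {X : Type*} [MetricSpace X]
    [MeasurableSpace X] [BorelSpace X] (μ : Measure X)
    (d c₁ c₂ : ℝ) (hd : 0 < d) (hc₁ : 0 < c₁)
    (hfin : μ Set.univ ≠ ⊤)
    (hdiam : 0 < EMetric.diam (Set.univ : Set X))
    (hAR : ∀ (x : X) (r : ℝ), 0 < r →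
      ENNReal.ofReal r ≤ EMetric.diam (Set.univ : Set X) →
      ENNReal.ofReal (c₁ * r ^ d) ≤ μ (Metric.ball x r) ∧
        μ (Metric.ball x r) ≤ ENNReal.ofReal (c₂ * r ^ d)) :
    ∃ c₃ c₄ : ℝ, 0 < c₃ ∧ 0 < c₄ ∧ ∀ N : ℕ, 0 < N →
      ∃ P : Fin N → Set X,
        (∀ i, MeasurableSet (P i)) ∧
        Pairwise (Function.onFun Disjoint P) ∧
        (⋃ i, P i) = Set.univ ∧
        ∀ i, (∃ x : X, P i ⊆ Metric.closedBall x (c₃ * (N : ℝ) ^ (-(1 / d)))) ∧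
          ∃ y : X, Metric.ball y (c₄ * (N : ℝ) ^ (-(1 / d))) ⊆ P i := by
  have hAR : IsAhlforsRegular μ d c₁ c₂ := hAR
  have : IsFiniteMeasure μ := ⟨hfin.lt_top⟩
  have hD := hAR.diam_univ_pos hd hc₁ hdiam
  have := boundedSpace_of_diam_univ_pos hD
  have := hAR.infinite hd hc₁ hD
  have := hAR.neZero hc₁ hD
  have hM : 0 < μ.real univ := measureReal_univ_pos
  obtain ⟨A, hA, hball⟩ := hAR.exists_measure_closedBall_le hd hc₁ hD
  refine ⟨4 * (μ.real univ / c₁) ^ (1 / d), (μ.real univ / A) ^ (1 / d) / 4, by positivity,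
    by positivity, fun N hN => ?_⟩
  have : Nonempty (Fin N) := ⟨⟨0, hN⟩⟩
  set x : Fin N → X := fun i => greedySeq X i
  have hnet (p : X) : ∃ j, dist p (x j) ≤ coveringRadius (greedyNet X N) :=
    let ⟨j, hj, hpj⟩ := exists_dist_greedySeq_le hN p
    ⟨⟨j, hj⟩, hpj⟩
  refine ⟨disjointed (voronoiCell x), measurableSet_disjointed_voronoiCell x,
    disjoint_disjointed _, by rw [iUnion_disjointed, iUnion_voronoiCell],
    fun i => ⟨⟨x i, ?_⟩, x i, ball_subset_disjointed_voronoiCell fun j hji => ?_⟩⟩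
  · exact (disjointed_subset _ _).trans <| (voronoiCell_subset_closedBall hnet i).trans <|
      closedBall_subset_closedBall (hAR.coveringRadius_greedyNet_le hd hc₁ hN)
  · have hij : (i : ℕ) ≠ j := Fin.val_ne_of_ne hji.symm
    calc 2 * ((μ.real univ / A) ^ (1 / d) / 4 * (N : ℝ) ^ (-(1 / d)))
        = (μ.real univ / A) ^ (1 / d) * (N : ℝ) ^ (-(1 / d)) / 2 := by ring
      _ ≤ coveringRadius (greedyNet X (N - 1)) / 2 := by
          gcongr
          exact le_coveringRadius_greedyNet hd hA hball (by omega) (N.sub_le 1)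
      _ ≤ dist (x i) (x j) := half_coveringRadius_greedyNet_le_dist hij (by omega) (by omega)

/-- An Ahlfors regular metric measure space of dimension `d > 0` with finite
measure, equipped with a family of dyadic cubes, can be partitioned for every positive `N`
into exactly `N` measurable regions, each contained in a closed ball of radius `c₃ N^{-1/d}`
and each containing an open ball of radius `c₄ N^{-1/d}`. -/
theorem exists_partition_of_dyadic_cubes
    {X : Type*} [MetricSpace X] [CompleteSpace X]
    [MeasurableSpace X] [BorelSpace X] (μ : Measure X)
    (d c₁ c₂ : ℝ) (hd : 0 < d) (hc₁ : 0 < c₁) (hc₁₂ : c₁ ≤ c₂)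
    (hfin : μ Set.univ ≠ ⊤)
    (hdiam : 0 < EMetric.diam (Set.univ : Set X))
    (hAR : ∀ (x : X) (r : ℝ), 0 < r →
      ENNReal.ofReal r ≤ EMetric.diam (Set.univ : Set X) →
      ENNReal.ofReal (c₁ * r ^ d) ≤ μ (Metric.ball x r) ∧
        μ (Metric.ball x r) ≤ ENNReal.ofReal (c₂ * r ^ d))
    (δ a₀ a₁ : ℝ) (hδ0 : 0 < δ) (hδ1 : δ < 1) (ha₀ : 0 < a₀) (ha₀₁ : a₀ ≤ a₁)
    (I : ℤ → Type*) (Q : ∀ k : ℤ, I k → Set X) (z : ∀ k : ℤ, I k → X)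
    (hcover : ∀ k : ℤ, μ (Set.univ \ ⋃ α : I k, Q k α) = 0)
    (hdisj : ∀ (k : ℤ) (α β : I k), α ≠ β → Disjoint (Q k α) (Q k β))
    (hnest : ∀ (k l : ℤ), k < l → ∀ (α : I k) (β : I l),
      Q l β ⊆ Q k α ∨ Disjoint (Q l β) (Q k α))
    (hinner : ∀ (k : ℤ) (α : I k), Metric.ball (z k α) (a₀ * δ ^ k) ⊆ Q k α)
    (houter : ∀ (k : ℤ) (α : I k), Q k α ⊆ Metric.ball (z k α) (a₁ * δ ^ k)) :
    ∃ c₃ c₄ : ℝ, 0 < c₃ ∧ 0 < c₄ ∧ ∀ N : ℕ, 0 < N →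
      ∃ P : Fin N → Set X,
        (∀ i, MeasurableSet (P i)) ∧
        Pairwise (Function.onFun Disjoint P) ∧
        (⋃ i, P i) = Set.univ ∧
        ∀ i, (∃ x : X, P i ⊆ Metric.closedBall x (c₃ * (N : ℝ) ^ (-(1 / d)))) ∧
          ∃ y : X, Metric.ball y (c₄ * (N : ℝ) ^ (-(1 / d))) ⊆ P i :=
  exists_partition_of_dyadic_cubes_general μ d c₁ c₂ hd hc₁ hfin hdiam hAR
end

section
/- Let (X, ρ, μ) be an Ahlfors regular metric measure space of dimension d > 0 with finite measure, and suppose there exist constants c₃ > 0 and ε > 0 and arbitrarily large integers N such that X admits a partition into N measurable regions of measure μ(X)/N, each contained in a ball of radius c₃ N^{-1/d}. If X is not connected, writing X as the disjoint union of two nonempty open sets Y and W, one derives a contradiction: μ(Y) would be an integer multiple of μ(X)/N for all such N with c₃ N^{-1/d} less than the distance between Y and W, which is impossible. Hence a disconnected Ahlfors regular space of finite measure does not admit, for all sufficiently large N, equal-measure partitions into N regions of diameter at most 2 c₃ N^{-1/d}. -/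
open MeasureTheory Metric Set
open scoped ENNReal NNReal

/-!
The lower Ahlfors bound gives all balls of a fixed radius measure bounded away from zero, so the
finite measure forces `X` to be totally bounded, hence compact, and the open pieces `Y` and
`W = Yᶜ` lie at a positive distance `δ`. A partition into `N` pieces of diameter `< δ` has every
piece inside `Y` or inside `W`, so `t = μ(Y) / μ(X)` satisfies `t * N ∈ ℕ`. Doing this for `N`
and `N + 1` makes `t = t * (N + 1) - t * N` an integer, although `0 < t < 1`.
-/

lemma exists_forall_le_measure_ball_of_ahlfors_lower {X : Type*} [MetricSpace X] [MeasurableSpace X]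
    [Nontrivial X] {μ : Measure X} {c₁ d : ℝ} (hc₁ : 0 < c₁)
    (hlower : ∀ (x : X) (r : ℝ), 0 < r → ENNReal.ofReal r ≤ ediam (univ : Set X) →
      ENNReal.ofReal (c₁ * r ^ d) ≤ μ (ball x r))
    {r : ℝ} (hr : 0 < r) : ∃ c ≠ 0, ∀ x, c ≤ μ (ball x r) := by
  obtain ⟨a, b, hab⟩ := exists_pair_ne X
  set ρ := min r (dist a b)
  have hρ : 0 < ρ := lt_min hr (dist_pos.2 hab)
  have hρ_diam : ENNReal.ofReal ρ ≤ ediam (univ : Set X) :=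
    calc ENNReal.ofReal ρ ≤ edist a b := by
          rw [edist_dist]; exact ENNReal.ofReal_le_ofReal (min_le_right _ _)
      _ ≤ _ := edist_le_ediam_of_mem (mem_univ a) (mem_univ b)
  refine ⟨ENNReal.ofReal (c₁ * ρ ^ d), (ENNReal.ofReal_pos.2 (by positivity)).ne', fun x => ?_⟩
  exact (hlower x ρ hρ hρ_diam).trans (measure_mono (ball_subset_ball (min_le_left _ _)))

lemma isOpenPosMeasure_of_forall_measure_ball_ne_zero {X : Type*} [MetricSpace X]
    [MeasurableSpace X] {μ : Measure X} (h : ∀ (x : X) (r : ℝ), 0 < r → μ (ball x r) ≠ 0) :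
    μ.IsOpenPosMeasure where
  open_pos U hU := fun ⟨x, hx⟩ => by
    obtain ⟨r, hr, hball⟩ := Metric.isOpen_iff.1 hU x hx
    exact fun hU0 => h x r hr (measure_mono_null hball hU0)

/-- A uniform lower bound on the measure of `r`-balls leaves room for only finitely many disjoint
`r`-balls in a space of finite measure. -/
lemma compactSpace_of_forall_exists_le_measure_ball {X : Type*} [MetricSpace X] [CompleteSpace X]
    [MeasurableSpace X] [OpensMeasurableSpace X] {μ : Measure X} (hfin : μ univ ≠ ⊤)
    (hball : ∀ r : ℝ, 0 < r → ∃ c ≠ 0, ∀ x, c ≤ μ (ball x r)) : CompactSpace X := by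
  refine ⟨TotallyBounded.isCompact_of_isClosed ?_ isClosed_univ⟩
  rw [Metric.totallyBounded_iff]
  intro ε hε
  by_contra! hcover
  have hsep : ∀ s : Finset X, ∃ y, ∀ x ∈ s, Disjoint (ball x (ε / 2)) (ball y (ε / 2)) := by
    intro s
    obtain ⟨y, -, hy⟩ := not_subset.1 (hcover s s.finite_toSet)
    refine ⟨y, fun x hx => ball_disjoint_ball ?_⟩
    have := not_lt.1 fun h => hy (mem_biUnion hx (mem_ball.2 h))
    rw [dist_comm]; linarith
  obtain ⟨f, -, hf⟩ := @exists_seq_of_forall_finset_exists' X (fun _ => True)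
    (fun x y => Disjoint (ball x (ε / 2)) (ball y (ε / 2))) ⟨fun _ _ h => h.symm⟩
    (fun s _ => (hsep s).imp fun _ hy => ⟨trivial, hy⟩)
  obtain ⟨c, hc, hcle⟩ := hball (ε / 2) (by positivity)
  refine hfin (top_le_iff.1 ?_)
  calc ⊤ = ∑' _ : ℕ, c := (ENNReal.tsum_const_eq_top_of_ne_zero hc).symm
    _ ≤ ∑' n, μ (ball (f n) (ε / 2)) := ENNReal.tsum_le_tsum fun n => hcle (f n)
    _ = μ (⋃ n, ball (f n) (ε / 2)) := (measure_iUnion hf fun _ => measurableSet_ball).symm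
    _ ≤ μ univ := measure_mono (subset_univ _)

lemma IsClopen.exists_pos_forall_le_dist {X : Type*} [MetricSpace X] [CompactSpace X]
    {Y : Set X} (hY : IsClopen Y) : ∃ δ > 0, ∀ y ∈ Y, ∀ z ∉ Y, δ ≤ dist y z := by
  obtain ⟨δ, hδ, hlt⟩ := Metric.exists_pos_forall_lt_edist hY.isClosed.isCompact
    hY.isOpen.isClosed_compl disjoint_compl_right
  refine ⟨δ, hδ, fun y hy z hz => ?_⟩
  have := hlt y hy z hz
  rw [edist_dist, ← ENNReal.ofReal_coe_nnreal, ENNReal.ofReal_lt_ofReal_iff'] at this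
  exact this.1.le

lemma IsClopen.measureReal_div_measureReal_univ_mem_Ioo {X : Type*} [TopologicalSpace X]
    [MeasurableSpace X] [OpensMeasurableSpace X] {μ : Measure X} [IsFiniteMeasure μ]
    [μ.IsOpenPosMeasure] {Y : Set X} (hY : IsClopen Y) (hYne : Y.Nonempty) (hYcne : Yᶜ.Nonempty) :
    μ.real Y / μ.real univ ∈ Ioo 0 1 := by
  have hpos {U : Set X} (hU : IsOpen U) (hne : U.Nonempty) : 0 < μ.real U :=
    ENNReal.toReal_pos (hU.measure_ne_zero μ hne) (measure_ne_top μ U)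
  have hY₀ := hpos hY.isOpen hYne
  have hYc₀ := hpos hY.isClosed.isOpen_compl hYcne
  rw [← measureReal_add_measureReal_compl hY.isOpen.measurableSet]
  exact ⟨by positivity, (div_lt_one (by positivity)).2 (by linarith)⟩

lemma subset_or_disjoint_of_diam_lt {X : Type*} [MetricSpace X] {Y P : Set X} {δ : ℝ}
    (hsep : ∀ y ∈ Y, ∀ z ∉ Y, δ ≤ dist y z) (hP : Bornology.IsBounded P) (hdiam : diam P < δ) :
    P ⊆ Y ∨ Disjoint P Y := by
  by_contra! ⟨hsub, hdisj⟩
  obtain ⟨z, hzP, hzY⟩ := not_subset.1 hsub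
  obtain ⟨y, hyP, hyY⟩ := not_disjoint_iff.1 hdisj
  exact (hsep y hyY z hzY).not_gt ((dist_le_diam_of_mem hP hyP hzP).trans_lt hdiam)

lemma exists_measure_eq_natCast_mul_of_forall_subset_or_disjoint {X ι : Type*}
    [MeasurableSpace X] [Fintype ι] {μ : Measure X} {P : ι → Set X}
    (hmeas : ∀ i, MeasurableSet (P i)) (hdisj : Pairwise (Function.onFun Disjoint P))
    (hcov : ⋃ i, P i = univ) {c : ℝ≥0∞} (hc : ∀ i, μ (P i) = c) {Y : Set X}
    (hY : ∀ i, P i ⊆ Y ∨ Disjoint (P i) Y) : ∃ k : ℕ, μ Y = k * c := by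
  classical
  set S := Finset.univ.filter fun i => P i ⊆ Y
  have hYS : Y = ⋃ i ∈ S, P i := by
    refine Subset.antisymm (fun y hy => ?_) (iUnion₂_subset fun i hi => (Finset.mem_filter.1 hi).2)
    obtain ⟨i, hi⟩ := mem_iUnion.1 (hcov.symm ▸ mem_univ y : y ∈ ⋃ i, P i)
    have hiY : P i ⊆ Y := (hY i).resolve_right (not_disjoint_iff.2 ⟨y, hi, hy⟩)
    exact mem_biUnion (Finset.mem_filter.2 ⟨Finset.mem_univ i, hiY⟩) hi
  refine ⟨S.card, ?_⟩
  rw [hYS, measure_biUnion_finset (fun i _ j _ hij => hdisj hij) fun i _ => hmeas i,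
    Finset.sum_congr rfl fun i _ => hc i, Finset.sum_const, nsmul_eq_mul]

lemma exists_measureReal_div_mul_eq_natCast_of_forall_subset_or_disjoint {X : Type*}
    [MeasurableSpace X] {μ : Measure X} [IsFiniteMeasure μ] [NeZero μ] {N : ℕ} (hN : N ≠ 0)
    {P : Fin N → Set X} (hmeas : ∀ i, MeasurableSet (P i))
    (hdisj : Pairwise (Function.onFun Disjoint P)) (hcov : ⋃ i, P i = univ)
    (hP : ∀ i, μ (P i) = μ univ / N) {Y : Set X} (hY : ∀ i, P i ⊆ Y ∨ Disjoint (P i) Y) :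
    ∃ k : ℕ, μ.real Y / μ.real univ * N = k := by
  obtain ⟨k, hk⟩ :=
    exists_measure_eq_natCast_mul_of_forall_subset_or_disjoint hmeas hdisj hcov hP hY
  refine ⟨k, ?_⟩
  have hkreal : μ.real Y = k * (μ.real univ / N) := by simp [Measure.real, hk, ENNReal.toReal_div]
  rw [hkreal]
  field_simp [measureReal_univ_pos.ne']

lemma natCast_mul_succ_ne {t : ℝ} (ht : t ∈ Ioo 0 1) {N k k' : ℕ} (h : t * N = k) :
    t * (N + 1) ≠ k' := by
  intro h'
  obtain ⟨ht₀, ht₁⟩ := ht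
  have hk : (k : ℝ) < k' := by linarith
  have hk' : (k' : ℝ) < k + 1 := by linarith
  have : k < k' := by exact_mod_cast hk
  have : k' < k + 1 := by exact_mod_cast hk'
  omega

theorem no_equal_measure_partition_of_disconnected_general
    {X : Type*} [MetricSpace X] [CompleteSpace X]
    [MeasurableSpace X] [BorelSpace X] (μ : Measure X)
    (d c₁ c₂ : ℝ) (hd : 0 < d) (hc₁ : 0 < c₁)
    (hfin : μ Set.univ ≠ ⊤)
    (hAR : ∀ (x : X) (r : ℝ), 0 < r →
      ENNReal.ofReal r ≤ EMetric.diam (Set.univ : Set X) →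
      ENNReal.ofReal (c₁ * r ^ d) ≤ μ (Metric.ball x r) ∧
        μ (Metric.ball x r) ≤ ENNReal.ofReal (c₂ * r ^ d))
    (Y W : Set X) (hYopen : IsOpen Y) (hWopen : IsOpen W)
    (hYne : Y.Nonempty) (hWne : W.Nonempty) (hYW : Disjoint Y W)
    (hcover : Y ∪ W = Set.univ) :
    ∀ c₃ : ℝ, 0 < c₃ →
      ¬ ∃ N₀ : ℕ, ∀ N : ℕ, N₀ ≤ N →
        ∃ P : Fin N → Set X,
          (∀ i, MeasurableSet (P i)) ∧
          Pairwise (Function.onFun Disjoint P) ∧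
          (⋃ i, P i) = Set.univ ∧
          ∀ i, μ (P i) = μ Set.univ / N ∧
            Metric.diam (P i) ≤ 2 * c₃ * (N : ℝ) ^ (-(1 / d)) := by
  rintro c₃ - ⟨N₀, hpart⟩
  obtain rfl : W = Yᶜ := (IsCompl.of_eq hYW.eq_bot hcover).compl_eq.symm
  have hY : IsClopen Y := ⟨isOpen_compl_iff.1 hWopen, hYopen⟩
  have : Nontrivial X := nontrivial_of_ne _ _ (ne_of_mem_of_not_mem hYne.some_mem hWne.some_mem)
  have : IsFiniteMeasure μ := ⟨hfin.lt_top⟩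
  have hball (r : ℝ) (hr : 0 < r) : ∃ c ≠ 0, ∀ x, c ≤ μ (ball x r) :=
    exists_forall_le_measure_ball_of_ahlfors_lower hc₁ (fun x r hr h => (hAR x r hr h).1) hr
  have : CompactSpace X := compactSpace_of_forall_exists_le_measure_ball hfin hball
  have : μ.IsOpenPosMeasure := isOpenPosMeasure_of_forall_measure_ball_ne_zero fun x r hr =>
    let ⟨_, hc, hle⟩ := hball r hr; ne_bot_of_le_ne_bot hc (hle x)
  obtain ⟨δ, hδ, hsep⟩ := hY.exists_pos_forall_le_dist
  have hsmall : ∀ᶠ N : ℕ in Filter.atTop, 2 * c₃ * (N : ℝ) ^ (-(1 / d)) < δ := by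
    refine Filter.Tendsto.eventually_lt_const hδ ?_
    simpa using ((tendsto_rpow_neg_atTop (one_div_pos.2 hd)).comp
      tendsto_natCast_atTop_atTop).const_mul (2 * c₃)
  have hmult : ∀ᶠ N : ℕ in Filter.atTop, ∃ k : ℕ, μ.real Y / μ.real univ * N = k := by
    filter_upwards [hsmall, Filter.eventually_ge_atTop N₀, Filter.eventually_ne_atTop 0]
      with N hN hN₀ hN0
    obtain ⟨P, hmeas, hdisj, hcov, hP⟩ := hpart N hN₀
    exact exists_measureReal_div_mul_eq_natCast_of_forall_subset_or_disjoint hN0 hmeas hdisj hcov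
      (fun i => (hP i).1) fun i => subset_or_disjoint_of_diam_lt hsep
        (Bornology.IsBounded.all _) ((hP i).2.trans_lt hN)
  obtain ⟨N, hN⟩ := hmult.exists_forall_of_atTop
  obtain ⟨k, hk⟩ := hN N le_rfl
  obtain ⟨k', hk'⟩ := hN (N + 1) N.le_succ
  exact natCast_mul_succ_ne (hY.measureReal_div_measureReal_univ_mem_Ioo hYne hWne) hk
    (by exact_mod_cast hk')

/-- A disconnected Ahlfors regular metric measure space of finite measure
(written as the disjoint union of two nonempty open sets `Y` and `W`) does not admit, for all
sufficiently large `N`, partitions into `N` regions of measure `μ(X)/N` and diameter at most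
`2 c₃ N^{-1/d}`. -/
theorem no_equal_measure_partition_of_disconnected
    {X : Type*} [MetricSpace X] [CompleteSpace X]
    [MeasurableSpace X] [BorelSpace X] (μ : Measure X)
    (d c₁ c₂ : ℝ) (hd : 0 < d) (hc₁ : 0 < c₁) (hc₁₂ : c₁ ≤ c₂)
    (hfin : μ Set.univ ≠ ⊤)
    (hAR : ∀ (x : X) (r : ℝ), 0 < r →
      ENNReal.ofReal r ≤ EMetric.diam (Set.univ : Set X) →
      ENNReal.ofReal (c₁ * r ^ d) ≤ μ (Metric.ball x r) ∧
        μ (Metric.ball x r) ≤ ENNReal.ofReal (c₂ * r ^ d))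
    (Y W : Set X) (hYopen : IsOpen Y) (hWopen : IsOpen W)
    (hYne : Y.Nonempty) (hWne : W.Nonempty) (hYW : Disjoint Y W)
    (hcover : Y ∪ W = Set.univ) :
    ∀ c₃ : ℝ, 0 < c₃ →
      ¬ ∃ N₀ : ℕ, ∀ N : ℕ, N₀ ≤ N →
        ∃ P : Fin N → Set X,
          (∀ i, MeasurableSet (P i)) ∧
          Pairwise (Function.onFun Disjoint P) ∧
          (⋃ i, P i) = Set.univ ∧
          ∀ i, μ (P i) = μ Set.univ / N ∧
            Metric.diam (P i) ≤ 2 * c₃ * (N : ℝ) ^ (-(1 / d)) :=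
  no_equal_measure_partition_of_disconnected_general μ d c₁ c₂ hd hc₁ hfin hAR Y W hYopen hWopen
    hYne hWne hYW hcover
end

section
/- Let (X, ρ, μ) be a connected Ahlfors regular metric measure space of dimension d > 0 with finite measure. Then there exist positive constants c₃, c₄ and, for every sufficiently large N, points z₁, …, z_N ∈ X such that (sup_{x ∈ X} min_j ρ(x, z_j)) / (min_{i ≠ j} ρ(z_i, z_j)) ≤ c₃/c₄; that is, X admits point sets of every sufficiently large cardinality with mesh-to-separation ratio bounded by a constant independent of N. -/
open MeasureTheory Metric Set
open scoped ENNReal NNReal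

/-- A connected Ahlfors regular metric measure space of dimension `d > 0`
with finite measure admits, for every sufficiently large `N`, point sets `z₁, …, z_N` whose
mesh-to-separation ratio is bounded by `c₃/c₄`: there are `sep > 0` and `mesh` with
`sep ≤ dist (z i) (z j)` for `i ≠ j`, every point of `X` within `mesh` of some `z j`, and
`mesh ≤ (c₃/c₄) sep`. -/
theorem exists_well_separated_covering_points
    {X : Type*} [MetricSpace X] [CompleteSpace X] [ConnectedSpace X] [Nontrivial X]
    [MeasurableSpace X] [BorelSpace X] (μ : Measure X)
    (d c₁ c₂ : ℝ) (hd : 0 < d) (hc₁ : 0 < c₁) (hc₁₂ : c₁ ≤ c₂)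
    (hfin : μ Set.univ ≠ ⊤)
    (hAR : ∀ (x : X) (r : ℝ), 0 < r →
      ENNReal.ofReal r ≤ EMetric.diam (Set.univ : Set X) →
      ENNReal.ofReal (c₁ * r ^ d) ≤ μ (Metric.ball x r) ∧
        μ (Metric.ball x r) ≤ ENNReal.ofReal (c₂ * r ^ d)) :
    ∃ c₃ c₄ : ℝ, 0 < c₃ ∧ 0 < c₄ ∧ ∃ N₀ : ℕ, ∀ N : ℕ, N₀ ≤ N →
      ∃ z : Fin N → X, ∃ mesh sep : ℝ, 0 < sep ∧
        (∀ i j : Fin N, i ≠ j → sep ≤ dist (z i) (z j)) ∧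
        (∀ x : X, ∃ j : Fin N, dist x (z j) ≤ mesh) ∧
        mesh ≤ (c₃ / c₄) * sep := by
  have hc₂ : 0 < c₂ := hc₁.trans_le hc₁₂
  set Vt : ℝ := (μ Set.univ).toReal with hVtdef
  have hVt0 : 0 ≤ Vt := ENNReal.toReal_nonneg
  -- the diameter is finite
  have hediam : EMetric.diam (Set.univ : Set X) ≠ ⊤ := by
    intro htop
    obtain ⟨x⟩ := (inferInstance : Nonempty X)
    set r : ℝ := (max 1 ((Vt + 1) / c₁)) ^ d⁻¹ with hrdef
    have hmax1 : (1 : ℝ) ≤ max 1 ((Vt + 1) / c₁) := le_max_left _ _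
    have hr0 : 0 < r := Real.rpow_pos_of_pos (by linarith) _
    have hrd : r ^ d = max 1 ((Vt + 1) / c₁) :=
      Real.rpow_inv_rpow (by linarith) hd.ne'
    have h1 : Vt + 1 ≤ c₁ * r ^ d := by
      rw [hrd]
      have : (Vt + 1) / c₁ ≤ max 1 ((Vt + 1) / c₁) := le_max_right _ _
      calc Vt + 1 = ((Vt + 1) / c₁) * c₁ := by field_simp
        _ ≤ max 1 ((Vt + 1) / c₁) * c₁ := by nlinarith
        _ = c₁ * max 1 ((Vt + 1) / c₁) := mul_comm _ _
    have h2 := (hAR x r hr0 (htop ▸ le_top)).1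
    have h3 : μ (Metric.ball x r) ≤ μ Set.univ := measure_mono (subset_univ _)
    have h4 : ENNReal.ofReal (c₁ * r ^ d) ≤ ENNReal.ofReal Vt := by
      calc ENNReal.ofReal (c₁ * r ^ d) ≤ μ Set.univ := h2.trans h3
        _ = ENNReal.ofReal Vt := (ENNReal.ofReal_toReal hfin).symm
    have h5 : c₁ * r ^ d ≤ Vt := (ENNReal.ofReal_le_ofReal_iff hVt0).mp h4
    linarith
  set D : ℝ := Metric.diam (Set.univ : Set X) with hDdef
  have hbounded : Bornology.IsBounded (Set.univ : Set X) :=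
    Metric.isBounded_iff_ediam_ne_top.mpr hediam
  have hD0 : 0 < D := by
    obtain ⟨x, y, hxy⟩ := exists_pair_ne X
    have := Metric.dist_le_diam_of_mem hbounded (mem_univ x) (mem_univ y)
    have := dist_pos.mpr hxy
    linarith
  -- reformulated Ahlfors bounds
  have hAR' : ∀ (x : X) (r : ℝ), 0 < r → r ≤ D →
      ENNReal.ofReal (c₁ * r ^ d) ≤ μ (Metric.ball x r) ∧
        μ (Metric.ball x r) ≤ ENNReal.ofReal (c₂ * r ^ d) := by
    intro x r hr hrD
    refine hAR x r hr ?_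
    have : EMetric.diam (Set.univ : Set X) = ENNReal.ofReal D :=
      (ENNReal.ofReal_toReal hediam).symm
    rw [this]
    exact ENNReal.ofReal_le_ofReal hrD
  have hVtpos : 0 < Vt := by
    obtain ⟨x⟩ := (inferInstance : Nonempty X)
    have h1 := (hAR' x D hD0 le_rfl).1
    have h2 : μ (Metric.ball x D) ≤ μ Set.univ := measure_mono (subset_univ _)
    have h3 : (0 : ℝ≥0∞) < ENNReal.ofReal (c₁ * D ^ d) := by
      refine ENNReal.ofReal_pos.mpr ?_
      positivity
    exact ENNReal.toReal_pos (ne_of_gt (lt_of_lt_of_le h3 (h1.trans h2))) hfin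
  -- Counting lemma A: separated sets are small
  have lemA : ∀ r : ℝ, 0 < r → r ≤ D → ∀ S : Finset X,
      ((S : Set X).Pairwise fun a b => 2 * r ≤ dist a b) →
      (S.card : ℝ) * (c₁ * r ^ d) ≤ Vt := by
    intro r hr hrD S hS
    have hdisj : (S : Set X).PairwiseDisjoint fun s => Metric.ball s r := by
      intro a ha b hb hab
      exact Metric.ball_disjoint_ball (by linarith [hS ha hb hab])
    have hmeas : μ (⋃ s ∈ S, Metric.ball s r) = ∑ s ∈ S, μ (Metric.ball s r) :=
      measure_biUnion_finset hdisj fun s _ => measurableSet_ball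
    have hlow : (S.card : ℝ≥0∞) * ENNReal.ofReal (c₁ * r ^ d) ≤
        ∑ s ∈ S, μ (Metric.ball s r) := by
      calc (S.card : ℝ≥0∞) * ENNReal.ofReal (c₁ * r ^ d)
          = ∑ _s ∈ S, ENNReal.ofReal (c₁ * r ^ d) := by
            rw [Finset.sum_const, nsmul_eq_mul]
        _ ≤ ∑ s ∈ S, μ (Metric.ball s r) :=
            Finset.sum_le_sum fun s _ => (hAR' s r hr hrD).1
    have hub : ∑ s ∈ S, μ (Metric.ball s r) ≤ ENNReal.ofReal Vt := by
      rw [← hmeas, hVtdef, ENNReal.ofReal_toReal hfin]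
      exact measure_mono (subset_univ _)
    have : ENNReal.ofReal ((S.card : ℝ) * (c₁ * r ^ d)) ≤ ENNReal.ofReal Vt := by
      rw [ENNReal.ofReal_mul (by positivity), ENNReal.ofReal_natCast]
      exact hlow.trans hub
    exact (ENNReal.ofReal_le_ofReal_iff hVt0).mp this
  -- Counting lemma B: nets are big
  have lemB : ∀ r : ℝ, 0 < r → r ≤ D → ∀ S : Finset X,
      (∀ x : X, ∃ s ∈ S, dist x s < r) → Vt ≤ (S.card : ℝ) * (c₂ * r ^ d) := by
    intro r hr hrD S hcov
    have hcover : (Set.univ : Set X) ⊆ ⋃ s ∈ S, Metric.ball s r := by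
      intro x _
      obtain ⟨s, hs, hxs⟩ := hcov x
      exact Set.mem_biUnion hs (Metric.mem_ball.mpr hxs)
    have h1 : ENNReal.ofReal Vt ≤ (S.card : ℝ≥0∞) * ENNReal.ofReal (c₂ * r ^ d) := by
      calc ENNReal.ofReal Vt = μ Set.univ := ENNReal.ofReal_toReal hfin
        _ ≤ μ (⋃ s ∈ S, Metric.ball s r) := measure_mono hcover
        _ ≤ ∑ s ∈ S, μ (Metric.ball s r) := measure_biUnion_finset_le _ _
        _ ≤ ∑ _s ∈ S, ENNReal.ofReal (c₂ * r ^ d) :=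
            Finset.sum_le_sum fun s _ => (hAR' s r hr hrD).2
        _ = (S.card : ℝ≥0∞) * ENNReal.ofReal (c₂ * r ^ d) := by
            rw [Finset.sum_const, nsmul_eq_mul]
    have h2 : ENNReal.ofReal Vt ≤ ENNReal.ofReal ((S.card : ℝ) * (c₂ * r ^ d)) := by
      rwa [ENNReal.ofReal_mul (by positivity), ENNReal.ofReal_natCast]
    exact (ENNReal.ofReal_le_ofReal_iff (by positivity)).mp h2
  -- Lemma C: maximal separated supersets exist, are finite, and are nets
  have lemC : ∀ r : ℝ, 0 < r → r ≤ D → ∀ T : Set X,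
      (T.Pairwise fun a b => r ≤ dist a b) →
      ∃ S : Finset X, T ⊆ ↑S ∧
        ((S : Set X).Pairwise fun a b => r ≤ dist a b) ∧
        ∀ x : X, ∃ s ∈ S, dist x s < r := by
    intro r hr hrD T hT
    set 𝒮 : Set (Set X) := {S | T ⊆ S ∧ S.Pairwise fun a b => r ≤ dist a b} with h𝒮
    have hchains : ∀ c ⊆ 𝒮, IsChain (· ⊆ ·) c → c.Nonempty →
        ∃ ub ∈ 𝒮, ∀ s ∈ c, s ⊆ ub := by
      intro c hc𝒮 hchain hne
      obtain ⟨s₀, hs₀⟩ := hne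
      refine ⟨⋃₀ c, ⟨?_, ?_⟩, fun s hs => subset_sUnion_of_mem hs⟩
      · exact ((hc𝒮 hs₀).1).trans (subset_sUnion_of_mem hs₀)
      · exact (Set.pairwise_sUnion hchain.directedOn).mpr fun a hac => (hc𝒮 hac).2
    obtain ⟨M, hTM, hMmem, hMmax⟩ : ∃ M, T ⊆ M ∧ M ∈ 𝒮 ∧ ∀ a ∈ 𝒮, M ⊆ a → a = M := by
      obtain ⟨M, hTM, hMmax⟩ := zorn_subset_nonempty 𝒮 hchains T ⟨Subset.rfl, hT⟩
      exact ⟨M, hTM, hMmax.1, fun a ha hMa => (hMmax.eq_of_le ha hMa).symm⟩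
    have hMsep := hMmem.2
    -- M is a net
    have hMnet : ∀ x : X, ∃ s ∈ M, dist x s < r := by
      intro x
      by_cases hxM : x ∈ M
      · exact ⟨x, hxM, by simpa using hr⟩
      by_contra h
      push_neg at h
      have hins : insert x M ∈ 𝒮 := by
        refine ⟨hTM.trans (subset_insert _ _), hMsep.insert ?_⟩
        intro s hs hsx
        exact ⟨h s hs, by rw [dist_comm]; exact h s hs⟩
      have := hMmax _ hins (subset_insert _ _)
      exact hxM (this ▸ mem_insert x M)
    -- M is finite
    have hMfin : M.Finite := by
      by_contra hinf
      have hinf : M.Infinite := hinf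
      set B : ℕ := ⌈Vt / (c₁ * (r / 2) ^ d)⌉₊ + 1 with hBdef
      obtain ⟨F, hFM, hFcard⟩ := hinf.exists_subset_card_eq B
      have hFsep : ((F : Set X).Pairwise fun a b => 2 * (r / 2) ≤ dist a b) := by
        intro a ha b hb hab
        have := hMsep (hFM ha) (hFM hb) hab
        linarith
      have h1 := lemA (r / 2) (by linarith) (by linarith) F hFsep
      rw [hFcard] at h1
      have h2 : 0 < c₁ * (r / 2) ^ d := by positivity
      have h3 : (B : ℝ) ≤ Vt / (c₁ * (r / 2) ^ d) := (le_div_iff₀ h2).mpr h1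
      have h4 : (B : ℝ) = ⌈Vt / (c₁ * (r / 2) ^ d)⌉₊ + 1 := by exact_mod_cast rfl
      have h5 : Vt / (c₁ * (r / 2) ^ d) ≤ ⌈Vt / (c₁ * (r / 2) ^ d)⌉₊ := Nat.le_ceil _
      linarith
    refine ⟨hMfin.toFinset, ?_, ?_, ?_⟩
    · rwa [Set.Finite.coe_toFinset]
    · rwa [Set.Finite.coe_toFinset]
    · intro x
      obtain ⟨s, hs, hxs⟩ := hMnet x
      exact ⟨s, hMfin.mem_toFinset.mpr hs, hxs⟩
  -- constants
  set K : ℝ := 2 * (c₂ / c₁) ^ d⁻¹ with hKdef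
  have hratio1 : (1 : ℝ) ≤ c₂ / c₁ := (one_le_div hc₁).mpr hc₁₂
  have hK1 : (1 : ℝ) ≤ K := by
    have := Real.one_le_rpow hratio1 (by positivity : (0:ℝ) ≤ d⁻¹)
    nlinarith
  have hK0 : (0 : ℝ) < K := by linarith
  have hKd : K ^ d = 2 ^ d * (c₂ / c₁) := by
    rw [hKdef, Real.mul_rpow (by norm_num) (by positivity),
      Real.rpow_inv_rpow (by positivity) hd.ne']
  have h2d : (0 : ℝ) < 2 ^ d := Real.rpow_pos_of_pos (by norm_num) d
  set A : ℝ := Vt * 2 ^ d / c₁ with hAdef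
  have hA0 : 0 < A := by positivity
  refine ⟨K, 1, hK0, one_pos, ⌈A / D ^ d⌉₊ + 1, ?_⟩
  intro N hN
  have hN0 : 0 < N := lt_of_lt_of_le (Nat.succ_pos _) hN
  have hNR : (0 : ℝ) < N := by exact_mod_cast hN0
  set ε : ℝ := (A / N) ^ d⁻¹ with hεdef
  have hε0 : 0 < ε := Real.rpow_pos_of_pos (by positivity) _
  have hεd : ε ^ d = A / N := Real.rpow_inv_rpow (by positivity) hd.ne'
  have hεD : ε ≤ D := by
    have hADN : A / D ^ d < N := by
      have h1 : A / D ^ d ≤ ⌈A / D ^ d⌉₊ := Nat.le_ceil _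
      have h2 : (⌈A / D ^ d⌉₊ : ℝ) + 1 ≤ N := by exact_mod_cast hN
      linarith
    have hDd : 0 < D ^ d := Real.rpow_pos_of_pos hD0 _
    have h3 : A / N ≤ D ^ d := by
      rw [div_le_iff₀ hNR]
      have := (div_lt_iff₀ hDd).mp hADN
      nlinarith
    calc ε ≤ (D ^ d) ^ d⁻¹ :=
          Real.rpow_le_rpow (by positivity) h3 (by positivity)
      _ = D := Real.rpow_rpow_inv hD0.le hd.ne'
  -- the coarse net T
  obtain ⟨T, -, hTsep, hTnet⟩ := lemC ε hε0 hεD ∅ (Set.pairwise_empty _)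
  -- key identity: c₁ * (ε/2)^d = Vt / N
  have hhalf : c₁ * (ε / 2) ^ d = Vt / N := by
    rw [Real.div_rpow hε0.le (by norm_num), hεd, hAdef]
    field_simp
  have hTcard : T.card ≤ N := by
    have hTsep2 : ((T : Set X).Pairwise fun a b => 2 * (ε / 2) ≤ dist a b) := by
      intro a ha b hb hab
      have := hTsep ha hb hab
      linarith
    have h1 := lemA (ε / 2) (by linarith) (by linarith) T hTsep2
    rw [hhalf] at h1
    have h2 : (T.card : ℝ) ≤ N := by
      have hV : 0 < Vt / N := by positivity
      have := (le_div_iff₀ hV).mpr h1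
      calc (T.card : ℝ) ≤ Vt / (Vt / N) := this
        _ = N := by field_simp
    exact_mod_cast h2
  -- the fine net U ⊇ T
  have hεK0 : 0 < ε / K := by positivity
  have hεKε : ε / K ≤ ε := by
    rw [div_le_iff₀ hK0]; nlinarith
  have hTsepK : ((T : Set X).Pairwise fun a b => ε / K ≤ dist a b) :=
    fun a ha b hb hab => hεKε.trans (hTsep ha hb hab)
  obtain ⟨U, hTU, hUsep, hUnet⟩ := lemC (ε / K) hεK0 (hεKε.trans hεD) ↑T hTsepK
  have hTUfin : T ⊆ U := by exact_mod_cast hTU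
  have hfine : c₂ * (ε / K) ^ d = Vt / N := by
    rw [Real.div_rpow hε0.le hK0.le, hεd, hKd, hAdef]
    field_simp
  have hUcard : N ≤ U.card := by
    have h1 := lemB (ε / K) hεK0 (hεKε.trans hεD) U hUnet
    rw [hfine] at h1
    have h1' := mul_le_mul_of_nonneg_right h1 hNR.le
    have heq : ((U.card : ℝ) * (Vt / N)) * N = (U.card : ℝ) * Vt := by
      field_simp
    rw [heq, mul_comm Vt (N : ℝ)] at h1'
    have h1'' : (N : ℝ) * Vt ≤ (U.card : ℝ) * Vt := h1'
    have h2 : (N : ℝ) ≤ U.card := le_of_mul_le_mul_right h1'' hVtpos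
    exact_mod_cast h2
  -- choose exactly N points
  obtain ⟨W, hTW, hWU, hWcard⟩ := Finset.exists_subsuperset_card_eq hTUfin hTcard hUcard
  have e : Fin N ≃ {x // x ∈ W} := (Fin.castOrderIso hWcard.symm).toEquiv.trans W.equivFin.symm
  refine ⟨fun i => (e i : X), ε, ε / K, hεK0, ?_, ?_, ?_⟩
  · intro i j hij
    have hne : ((e i : X)) ≠ (e j : X) := by
      intro h
      exact hij (e.injective (Subtype.ext h))
    exact hUsep (hWU (e i).2) (hWU (e j).2) hne
  · intro x
    obtain ⟨t, htT, hxt⟩ := hTnet x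
    have htW : t ∈ W := hTW htT
    refine ⟨e.symm ⟨t, htW⟩, ?_⟩
    simp only [Equiv.apply_symm_apply]
    exact hxt.le
  · rw [div_one]
    rw [mul_div_cancel₀ _ hK0.ne']
end
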